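/- Let ρ and σ be (possibly empty) binary strings and let j ≥ 1. Then the threshold graphs G = T(ρ 1 0 1^j 0 1 σ) and G' = T(ρ 0 1^{j+2} 0 σ) have the same number of vertices and edges, i(G) > i(G'), and i_k(G) ≥ i_k(G') for every k ≥ 0. -/

import Mathlib

/-!
Common definitions: threshold graphs from binary codes, counts of matchings and
independent sets, lex and colex graphs, and almost alternating codes.

A binary code is a `List Bool` whose head is the *leftmost* (most significant,
last added) digit; `true` stands for the digit `1` and `false` for `0`.
Reading the code from right to left, each digit adds a vertex: a `1` adds a
dominating vertex and a `0` adds an isolated vertex.  Equivalently, the vertex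
at position `i` (from the left) is adjacent to every vertex to its right iff
its digit is `1`.  Note that the value of the rightmost digit (the star) never
affects the graph.
-/

/-- The threshold graph encoded by a binary code `σ`. -/
def threshOf (σ : List Bool) : SimpleGraph (Fin σ.length) where
  Adj i j := i ≠ j ∧ σ.get (min i j) = true
  symm := by
    refine ⟨?_⟩
    intro i j h
    refine ⟨h.1.symm, ?_⟩
    rw [min_comm]
    exact h.2
  loopless := by
    refine ⟨?_⟩
    intro i h
    exact h.1 rfl

/-- The number of edges of a graph. -/
noncomputable def edgeCount {V : Type*} (G : SimpleGraph V) : ℕ := Nat.card G.edgeSet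

/-- `M` is a matching of `G`: a set of pairwise disjoint edges of `G`. -/
def IsMatchingSet {V : Type*} (G : SimpleGraph V) (M : Finset (Sym2 V)) : Prop :=
  (∀ e ∈ M, e ∈ G.edgeSet) ∧ ∀ e ∈ M, ∀ f ∈ M, e ≠ f → ∀ v : V, v ∈ e → v ∉ f

/-- `m(G)`: the total number of matchings of `G` (including the empty matching). -/
noncomputable def matchCount {V : Type*} (G : SimpleGraph V) : ℕ :=
  Nat.card {M : Finset (Sym2 V) // IsMatchingSet G M}

/-- `m_k(G)`: the number of matchings of `G` of size `k`. -/
noncomputable def matchCountK {V : Type*} (G : SimpleGraph V) (k : ℕ) : ℕ :=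
  Nat.card {M : Finset (Sym2 V) // IsMatchingSet G M ∧ M.card = k}

/-- `i(G)`: the number of independent sets of `G` (including the empty set). -/
noncomputable def indCount {V : Type*} (G : SimpleGraph V) : ℕ :=
  Nat.card {S : Finset V // ∀ u ∈ S, ∀ v ∈ S, ¬ G.Adj u v}

/-- `i_k(G)`: the number of independent sets of `G` of size `k`. -/
noncomputable def indCountK {V : Type*} (G : SimpleGraph V) (k : ℕ) : ℕ :=
  Nat.card {S : Finset V // (∀ u ∈ S, ∀ v ∈ S, ¬ G.Adj u v) ∧ S.card = k}

/-- Two codes encode the same threshold graph: they have the same length and agree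
except possibly in the rightmost (starred) digit. -/
def CodeEquiv (σ τ : List Bool) : Prop := σ.length = τ.length ∧ σ.dropLast = τ.dropLast

/-- Words that are concatenations of copies of the letters `a = 01` and `b = 10`. -/
inductive IsABWord : List Bool → Prop
  | nil : IsABWord []
  | a {w : List Bool} : IsABWord w → IsABWord (false :: true :: w)
  | b {w : List Bool} : IsABWord w → IsABWord (true :: false :: w)

/-- `w` is a concatenation of `α` copies of the letter `a = 01` and `β` copies of the
letter `b = 10`, in some order. -/
def IsABWordWith (α β : ℕ) (w : List Bool) : Prop :=
  ∃ ls : List (List Bool), (∀ x ∈ ls, x = [false, true] ∨ x = [true, false]) ∧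
    ls.count [false, true] = α ∧ ls.count [true, false] = β ∧ w = ls.flatten

/-- A code is almost alternating if (possibly after reinterpreting the starred rightmost
digit) it is an initial constant block followed by a word in the letters `a = 01` and
`b = 10`, either using the rightmost digit as the final digit of the last letter
(unstarred case) or keeping the rightmost digit separate after the word (starred case). -/
def IsAlmostAltCode (σ : List Bool) : Prop :=
  ∃ τ : List Bool, CodeEquiv σ τ ∧
    ∃ (t : ℕ) (c : Bool) (w : List Bool), IsABWord w ∧
      (τ = List.replicate t c ++ w ∨ ∃ d : Bool, τ = List.replicate t c ++ w ++ [d])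

/-- A small almost alternating code: the initial block consists of `0`'s (or is empty). -/
def IsSmallAACode (σ : List Bool) : Prop :=
  ∃ τ : List Bool, CodeEquiv σ τ ∧
    ∃ (t : ℕ) (w : List Bool), IsABWord w ∧
      (τ = List.replicate t false ++ w ∨ ∃ d : Bool, τ = List.replicate t false ++ w ++ [d])

/-- A large almost alternating code: the initial block is a nonempty block of `1`'s. -/
def IsLargeAACode (σ : List Bool) : Prop :=
  ∃ τ : List Bool, CodeEquiv σ τ ∧
    ∃ (t : ℕ) (w : List Bool), 1 ≤ t ∧ IsABWord w ∧
      (τ = List.replicate t true ++ w ∨ ∃ d : Bool, τ = List.replicate t true ++ w ++ [d])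

/-- A code has a bracketed string if (possibly after reinterpreting the starred rightmost
digit) it contains a substring `1 0^j 1` or `0 1^j 0` with `j ≥ 3`. -/
def HasBracketedString (σ : List Bool) : Prop :=
  ∃ τ : List Bool, CodeEquiv σ τ ∧ ∃ (x y : List Bool) (j : ℕ), 3 ≤ j ∧
    (τ = x ++ [true] ++ List.replicate j false ++ [true] ++ y ∨
     τ = x ++ [false] ++ List.replicate j true ++ [false] ++ y)

/-- A code has a separation issue if it contains two pairs of repeated digits separated by
a substring of odd length, where the first pair is immediately preceded by the opposite
digit and the second pair is followed by at least one further digit. -/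
def HasSeparationIssue (σ : List Bool) : Prop :=
  ∃ (x m y : List Bool) (d c : Bool),
    Odd m.length ∧ y ≠ [] ∧ σ = x ++ [!d, d, d] ++ m ++ [c, c] ++ y

/-- The colex graph `C(n,e)`: the graph on `Fin n` whose edges are the first `e` pairs in
the colexicographic order.  The pair `{i, j}` with `i < j` has rank `j(j-1)/2 + i` in
this order. -/
def colexGraph (n e : ℕ) : SimpleGraph (Fin n) where
  Adj i j := i ≠ j ∧ max i.val j.val * (max i.val j.val - 1) / 2 + min i.val j.val < e
  symm := by
    refine ⟨?_⟩
    intro i j h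
    refine ⟨h.1.symm, ?_⟩
    rw [max_comm j.val i.val, min_comm j.val i.val]
    exact h.2
  loopless := by
    refine ⟨?_⟩
    intro i h
    exact h.1 rfl

/-- The lex graph `L(n,e)`: the graph on `Fin n` whose edges are the first `e` pairs in
the lexicographic order.  The pair `{i, j}` with `i < j` has rank
`i(n-1) - i(i-1)/2 + (j - i - 1)` in this order. -/
def lexGraph (n e : ℕ) : SimpleGraph (Fin n) where
  Adj i j := i ≠ j ∧
    min i.val j.val * (n - 1) - min i.val j.val * (min i.val j.val - 1) / 2
      + (max i.val j.val - min i.val j.val - 1) < e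
  symm := by
    refine ⟨?_⟩
    intro i j h
    refine ⟨h.1.symm, ?_⟩
    rw [max_comm j.val i.val, min_comm j.val i.val]
    exact h.2
  loopless := by
    refine ⟨?_⟩
    intro i h
    exact h.1 rfl


/-!
Deleting the leftmost vertex of `T(b w)` leaves `T(w)`. For `b = 1` that vertex is dominating, so
the only new independent set is the singleton and `i_k` gains `[k = 1]`; for `b = 0` it is
isolated and `i_{k+1}(T(0 w)) = i_{k+1}(T(w)) + i_k(T(w))`. Unwinding both codes down to `T(σ)`
gives `i_k(T(1 0 1^j 0 1 σ)) = i_k(T(0 1^{j+2} 0 σ)) + [k = 3]`. Both recursions preserve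
"pointwise `≤` with one strict entry", so prepending `ρ` keeps it, and summing over `k` gives
`i(G) > i(G')`. Edges obey `e(T(b w)) = e(T(w)) + b |w|`, so two codes of equal length and equal
edge count keep both properties when `ρ` is prepended.
-/

open Finset

lemma Nat.card_and_add_card_and_not {α : Type*} [Finite α] (p q : α → Prop) :
    Nat.card {a // p a ∧ q a} + Nat.card {a // p a ∧ ¬ q a} = Nat.card {a // p a} := by
  classical
  rw [← Nat.card_sum]
  exact Nat.card_congr <| (Equiv.sumCongr (Equiv.subtypeSubtypeEquivSubtypeInter p q).symm
    (Equiv.subtypeSubtypeEquivSubtypeInter p (¬ q ·)).symm).trans (Equiv.sumCompl _)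

section Counting

variable {V W : Type*}

lemma indCountK_zero (G : SimpleGraph V) : indCountK G 0 = 1 := by
  rw [indCountK, Nat.card_eq_one_iff_exists]
  refine ⟨⟨∅, by simp⟩, fun S => Subtype.ext ?_⟩
  simpa using S.2.2

lemma indCount_eq_sum_indCountK [Fintype V] (G : SimpleGraph V) {N : ℕ}
    (hN : Fintype.card V ≤ N) : indCount G = ∑ k ∈ range (N + 1), indCountK G k := by
  classical
  simp only [indCount, indCountK, Nat.card_eq_fintype_card, Fintype.card_subtype]
  rw [card_eq_sum_card_fiberwise (f := Finset.card) (t := range (N + 1))]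
  · simp only [filter_filter]
  · intro S _
    simpa [Nat.lt_succ_iff] using S.card_le_univ.trans hN

lemma indCount_lt_indCount_of_indCountK_lt [Finite V] [Finite W] {G : SimpleGraph V}
    {H : SimpleGraph W} (h : indCountK G < indCountK H) : indCount G < indCount H := by
  have := Fintype.ofFinite V
  have := Fintype.ofFinite W
  obtain ⟨hle, k, hk⟩ := Pi.lt_def.1 h
  let N := max (Fintype.card V) (max (Fintype.card W) k)
  rw [indCount_eq_sum_indCountK G (N := N) (le_max_left _ _),
    indCount_eq_sum_indCountK H (N := N) ((le_max_left _ _).trans (le_max_right _ _))]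
  exact sum_lt_sum (fun m _ => hle m)
    ⟨k, mem_range.2 (Nat.lt_succ_of_le ((le_max_right _ _).trans (le_max_right _ _))), hk⟩

end Counting

section HeadVertex

variable {n : ℕ} (G : SimpleGraph (Fin (n + 1)))

lemma map_succEmb_preimage_succ {S : Finset (Fin (n + 1))} (h : 0 ∉ S) :
    (S.preimage Fin.succ (Fin.succ_injective n).injOn).map (Fin.succEmb n) = S := by
  ext x
  cases x using Fin.cases <;> simp [h]

lemma insert_zero_map_succEmb_preimage_succ {S : Finset (Fin (n + 1))} (h : 0 ∈ S) :
    insert 0 ((S.preimage Fin.succ (Fin.succ_injective n).injOn).map (Fin.succEmb n)) = S := by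
  ext x
  cases x using Fin.cases <;> simp [h, Fin.succ_ne_zero]

lemma natCard_indep_zero_notMem (k : ℕ) :
    Nat.card {S : Finset (Fin (n + 1)) //
      ((∀ u ∈ S, ∀ v ∈ S, ¬ G.Adj u v) ∧ S.card = k) ∧ 0 ∉ S} =
      indCountK (G.comap Fin.succ) k := by
  symm
  refine Nat.card_eq_of_bijective
    (fun T => ⟨T.1.map (Fin.succEmb n), by simpa [Fin.succ_ne_zero] using T.2⟩)
    ⟨fun T T' h => Subtype.ext (map_injective _ (congrArg Subtype.val h)), fun S => ?_⟩
  obtain ⟨S, ⟨hind, hcard⟩, h0⟩ := S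
  refine ⟨⟨S.preimage Fin.succ (Fin.succ_injective n).injOn,
    fun u hu v hv => hind _ (mem_preimage.1 hu) _ (mem_preimage.1 hv), ?_⟩,
    Subtype.ext (map_succEmb_preimage_succ h0)⟩
  rw [← hcard, ← card_map (Fin.succEmb n), map_succEmb_preimage_succ h0]

lemma natCard_indep_zero_mem_of_isolated (h : ∀ v, ¬ G.Adj 0 v) (k : ℕ) :
    Nat.card {S : Finset (Fin (n + 1)) //
      ((∀ u ∈ S, ∀ v ∈ S, ¬ G.Adj u v) ∧ S.card = k + 1) ∧ 0 ∈ S} =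
      indCountK (G.comap Fin.succ) k := by
  have h' : ∀ v, ¬ G.Adj v 0 := fun v hv => h v hv.symm
  symm
  refine Nat.card_eq_of_bijective
    (fun T => ⟨insert 0 (T.1.map (Fin.succEmb n)),
      by simpa [h, h', Fin.succ_ne_zero] using T.2⟩)
    ⟨fun T T' hT => Subtype.ext ?_, fun S => ?_⟩
  · have := congrArg (fun S => S.1.erase 0) hT
    simpa [erase_insert, Fin.succ_ne_zero] using this
  obtain ⟨S, ⟨hind, hcard⟩, h0⟩ := S
  refine ⟨⟨S.preimage Fin.succ (Fin.succ_injective n).injOn,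
    fun u hu v hv => hind _ (mem_preimage.1 hu) _ (mem_preimage.1 hv), ?_⟩,
    Subtype.ext (insert_zero_map_succEmb_preimage_succ h0)⟩
  have := congrArg card (insert_zero_map_succEmb_preimage_succ h0)
  rw [card_insert_of_notMem (by simp [Fin.succ_ne_zero]), card_map] at this
  omega

lemma natCard_indep_zero_mem_of_dominating (h : ∀ v ≠ 0, G.Adj 0 v) (k : ℕ) :
    Nat.card {S : Finset (Fin (n + 1)) //
      ((∀ u ∈ S, ∀ v ∈ S, ¬ G.Adj u v) ∧ S.card = k) ∧ 0 ∈ S} =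
      if k = 1 then 1 else 0 := by
  have hS : ∀ S : Finset (Fin (n + 1)),
      ((∀ u ∈ S, ∀ v ∈ S, ¬ G.Adj u v) ∧ S.card = k) ∧ 0 ∈ S ↔
        S = {0} ∧ k = 1 := by
    intro S
    constructor
    · rintro ⟨⟨hind, rfl⟩, h0⟩
      have : S = {0} := eq_singleton_iff_unique_mem.2
        ⟨h0, fun v hv => by_contra fun hv0 => hind 0 h0 v hv (h v hv0)⟩
      simp [this]
    · rintro ⟨rfl, rfl⟩
      simp
  rw [Nat.card_congr (Equiv.subtypeEquivRight hS)]
  split_ifs with hk <;> simp [hk]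

lemma indCountK_succ_of_isolated (h : ∀ v, ¬ G.Adj 0 v) (k : ℕ) :
    indCountK G (k + 1) =
      indCountK (G.comap Fin.succ) (k + 1) + indCountK (G.comap Fin.succ) k := by
  rw [indCountK, ← Nat.card_and_add_card_and_not _ (0 ∈ ·),
    natCard_indep_zero_mem_of_isolated G h, natCard_indep_zero_notMem, add_comm]

lemma indCountK_of_dominating (h : ∀ v ≠ 0, G.Adj 0 v) (k : ℕ) :
    indCountK G k = indCountK (G.comap Fin.succ) k + if k = 1 then 1 else 0 := by
  rw [indCountK, ← Nat.card_and_add_card_and_not _ (0 ∈ ·),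
    natCard_indep_zero_mem_of_dominating G h, natCard_indep_zero_notMem, add_comm]

end HeadVertex

lemma two_mul_edgeCount_eq_sum_sum {V : Type*} [Fintype V] (G : SimpleGraph V)
    [DecidableRel G.Adj] :
    2 * edgeCount G = ∑ v, ∑ w, if G.Adj v w then 1 else 0 := by
  classical
  simp only [edgeCount, Nat.card_eq_fintype_card, ← SimpleGraph.edgeFinset_card,
    ← G.sum_degrees_eq_twice_card_edges, ← G.card_neighborFinset_eq_degree,
    G.neighborFinset_eq_filter, card_filter]

lemma edgeCount_eq_edgeCount_comap_succ_add {n : ℕ} (G : SimpleGraph (Fin (n + 1))) :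
    edgeCount G = edgeCount (G.comap Fin.succ) + Nat.card {i : Fin n // G.Adj 0 i.succ} := by
  classical
  have hG := two_mul_edgeCount_eq_sum_sum G
  have hG' := two_mul_edgeCount_eq_sum_sum (G.comap Fin.succ)
  rw [Nat.card_eq_fintype_card, Fintype.card_subtype, card_filter]
  simp only [Fin.sum_univ_succ, G.adj_comm (Fin.succ _) 0, SimpleGraph.comap_adj,
    SimpleGraph.irrefl, if_false, sum_add_distrib] at hG hG'
  omega

section ThresholdGraph

variable (b : Bool) (w : List Bool)

lemma threshOf_cons_adj_zero (v : Fin (w.length + 1)) :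
    (threshOf (b :: w)).Adj 0 v ↔ v ≠ 0 ∧ b = true := by
  change 0 ≠ v ∧ (b :: w).get (min 0 v) = true ↔ _
  rw [min_eq_left (Fin.zero_le v), ne_comm]
  rfl

lemma comap_succ_threshOf_cons : (threshOf (b :: w)).comap Fin.succ = threshOf w := by
  ext i j
  change i.succ ≠ j.succ ∧ (b :: w).get (min i.succ j.succ) = true ↔
    i ≠ j ∧ w.get (min i j) = true
  rw [← Fin.strictMono_succ.monotone.map_min, Fin.succ_injective _ |>.ne_iff]
  rfl

lemma indCountK_threshOf_true_cons (k : ℕ) :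
    indCountK (threshOf (true :: w)) k = indCountK (threshOf w) k + if k = 1 then 1 else 0 := by
  rw [← comap_succ_threshOf_cons true w]
  exact indCountK_of_dominating _ (fun v hv => (threshOf_cons_adj_zero _ _ v).2 ⟨hv, rfl⟩) k

lemma indCountK_threshOf_false_cons_succ (k : ℕ) :
    indCountK (threshOf (false :: w)) (k + 1) =
      indCountK (threshOf w) (k + 1) + indCountK (threshOf w) k := by
  rw [← comap_succ_threshOf_cons false w]
  exact indCountK_succ_of_isolated _ (fun v hv => by simp [threshOf_cons_adj_zero] at hv) k

lemma edgeCount_threshOf_cons :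
    edgeCount (threshOf (b :: w)) = edgeCount (threshOf w) + if b then w.length else 0 := by
  rw [edgeCount_eq_edgeCount_comap_succ_add, comap_succ_threshOf_cons]
  cases b <;> simp [threshOf_cons_adj_zero, Fin.succ_ne_zero]

end ThresholdGraph

lemma edgeCount_threshOf_append_congr {x y : List Bool} (hlen : x.length = y.length)
    (h : edgeCount (threshOf x) = edgeCount (threshOf y)) (ρ : List Bool) :
    edgeCount (threshOf (ρ ++ x)) = edgeCount (threshOf (ρ ++ y)) := by
  induction ρ with
  | nil => exact h
  | cons b ρ ih =>
    rw [List.cons_append, List.cons_append, edgeCount_threshOf_cons, edgeCount_threshOf_cons, ih]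
    simp only [List.length_append, hlen]

lemma indCountK_threshOf_append_lt {x y : List Bool}
    (h : indCountK (threshOf y) < indCountK (threshOf x)) (ρ : List Bool) :
    indCountK (threshOf (ρ ++ y)) < indCountK (threshOf (ρ ++ x)) := by
  induction ρ with
  | nil => exact h
  | cons b ρ ih =>
    obtain ⟨hle, k, hk⟩ := Pi.lt_def.1 ih
    simp only [List.cons_append]
    cases b with
    | false =>
      refine Pi.lt_def.2 ⟨fun m => ?_, k + 1, ?_⟩
      · cases m with
        | zero => simp only [indCountK_zero, le_refl]
        | succ m =>
          rw [indCountK_threshOf_false_cons_succ, indCountK_threshOf_false_cons_succ]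
          exact add_le_add (hle _) (hle _)
      · rw [indCountK_threshOf_false_cons_succ, indCountK_threshOf_false_cons_succ]
        exact add_lt_add_of_le_of_lt (hle _) hk
    | true =>
      refine Pi.lt_def.2 ⟨fun m => ?_, k, ?_⟩ <;>
        rw [indCountK_threshOf_true_cons, indCountK_threshOf_true_cons]
      · exact Nat.add_le_add_right (hle m) _
      · exact Nat.add_lt_add_right hk _

lemma indCountK_threshOf_replicate_true_append (j : ℕ) (w : List Bool) (k : ℕ) :
    indCountK (threshOf (List.replicate j true ++ w)) k =
      indCountK (threshOf w) k + if k = 1 then j else 0 := by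
  induction j with
  | zero => simp
  | succ j ih =>
    rw [List.replicate_succ, List.cons_append, indCountK_threshOf_true_cons, ih]
    split_ifs <;> omega

lemma edgeCount_threshOf_replicate_true_append (j : ℕ) (w : List Bool) :
    edgeCount (threshOf (List.replicate j true ++ w)) =
      edgeCount (threshOf (List.replicate j true)) + edgeCount (threshOf w) + j * w.length := by
  induction j with
  | zero => simp [edgeCount]
  | succ j ih =>
    rw [List.replicate_succ, List.cons_append, edgeCount_threshOf_cons, edgeCount_threshOf_cons, ih]
    simp only [if_true, List.length_append, List.length_replicate]
    ring

lemma indCountK_threshOf_zeros_outward (σ : List Bool) (j k : ℕ) :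
    indCountK (threshOf (true :: false :: (List.replicate j true ++ false :: true :: σ))) k =
      indCountK (threshOf (false :: (List.replicate (j + 2) true ++ false :: σ))) k +
        if k = 3 then 1 else 0 := by
  rcases k with _ | _ | _ | _ | k <;>
    simp only [indCountK_threshOf_true_cons, indCountK_threshOf_false_cons_succ,
      indCountK_threshOf_replicate_true_append, indCountK_zero, Nat.reduceAdd, Nat.reduceEqDiff,
      ↓reduceIte] <;> omega

lemma indCountK_threshOf_zeros_outward_lt (σ : List Bool) (j : ℕ) :
    indCountK (threshOf (false :: (List.replicate (j + 2) true ++ false :: σ))) <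
      indCountK (threshOf (true :: false :: (List.replicate j true ++ false :: true :: σ))) := by
  refine Pi.lt_def.2 ⟨fun k => ?_, 3, ?_⟩ <;> rw [indCountK_threshOf_zeros_outward]
  · exact Nat.le_add_right _ _
  · exact Nat.lt_add_one _

lemma edgeCount_threshOf_zeros_outward (σ : List Bool) (j : ℕ) :
    edgeCount (threshOf (true :: false :: (List.replicate j true ++ false :: true :: σ))) =
      edgeCount (threshOf (false :: (List.replicate (j + 2) true ++ false :: σ))) := by
  rw [List.replicate_succ, List.replicate_succ]
  simp only [List.cons_append, edgeCount_threshOf_cons, edgeCount_threshOf_replicate_true_append]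
  simp only [Bool.false_eq_true, if_true, if_false, List.length_cons, List.length_append,
    List.length_replicate]
  ring

theorem nonconsecutive_zeros_indep_sets_general (ρ σ : List Bool) (j : ℕ) :
    (ρ ++ [true, false] ++ List.replicate j true ++ [false, true] ++ σ).length =
        (ρ ++ [false] ++ List.replicate (j + 2) true ++ [false] ++ σ).length ∧
      edgeCount (threshOf (ρ ++ [true, false] ++ List.replicate j true ++ [false, true] ++ σ)) =
        edgeCount (threshOf (ρ ++ [false] ++ List.replicate (j + 2) true ++ [false] ++ σ)) ∧
      indCount (threshOf (ρ ++ [false] ++ List.replicate (j + 2) true ++ [false] ++ σ)) <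
        indCount (threshOf (ρ ++ [true, false] ++ List.replicate j true ++ [false, true] ++ σ)) ∧
      ∀ k : ℕ,
        indCountK (threshOf (ρ ++ [false] ++ List.replicate (j + 2) true ++ [false] ++ σ)) k ≤
          indCountK (threshOf (ρ ++ [true, false] ++ List.replicate j true ++ [false, true] ++ σ)) k := by
  have hx : ρ ++ [true, false] ++ List.replicate j true ++ [false, true] ++ σ =
      ρ ++ true :: false :: (List.replicate j true ++ false :: true :: σ) := by simp
  have hy : ρ ++ [false] ++ List.replicate (j + 2) true ++ [false] ++ σ =
      ρ ++ false :: (List.replicate (j + 2) true ++ false :: σ) := by simp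
  rw [hx, hy]
  have hlt := indCountK_threshOf_append_lt (indCountK_threshOf_zeros_outward_lt σ j) ρ
  have hlen : (true :: false :: (List.replicate j true ++ false :: true :: σ)).length =
      (false :: (List.replicate (j + 2) true ++ false :: σ)).length := by
    simp only [List.length_cons, List.length_append, List.length_replicate]
    omega
  refine ⟨by rw [List.length_append, List.length_append, hlen], ?_,
    indCount_lt_indCount_of_indCountK_lt hlt, fun k => hlt.le k⟩
  exact edgeCount_threshOf_append_congr hlen (edgeCount_threshOf_zeros_outward σ j) ρ

/-- For binary strings `ρ, σ` and `j ≥ 1`, the threshold graphs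
`G = T(ρ 1 0 1^j 0 1 σ)` and `G' = T(ρ 0 1^{j+2} 0 σ)` have the same number of
vertices and edges, `i(G) > i(G')`, and `i_k(G) ≥ i_k(G')` for every `k`. -/
theorem nonconsecutive_zeros_indep_sets (ρ σ : List Bool) (j : ℕ) (hj : 1 ≤ j) :
    (ρ ++ [true, false] ++ List.replicate j true ++ [false, true] ++ σ).length =
        (ρ ++ [false] ++ List.replicate (j + 2) true ++ [false] ++ σ).length ∧
      edgeCount (threshOf (ρ ++ [true, false] ++ List.replicate j true ++ [false, true] ++ σ)) =
        edgeCount (threshOf (ρ ++ [false] ++ List.replicate (j + 2) true ++ [false] ++ σ)) ∧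
      indCount (threshOf (ρ ++ [false] ++ List.replicate (j + 2) true ++ [false] ++ σ)) <
        indCount (threshOf (ρ ++ [true, false] ++ List.replicate j true ++ [false, true] ++ σ)) ∧
      ∀ k : ℕ,
        indCountK (threshOf (ρ ++ [false] ++ List.replicate (j + 2) true ++ [false] ++ σ)) k ≤
          indCountK (threshOf (ρ ++ [true, false] ++ List.replicate j true ++ [false, true] ++ σ)) k :=
  nonconsecutive_zeros_indep_sets_general ρ σ j
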